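/- The circuit F* constructed from a type-respecting simplified clique decomposition of an acyclic circuit F is acyclic. -/

import Mathlib

/-- A simplified clique decomposition (scd), presented as the term generating
the final labeled graph: leaves introduce single vertices with a singleton
label, binary nodes take disjoint unions, and unary nodes add a new vertex,
unite two labels, or add all edges (arcs) between two labels. -/
inductive SCD (V : Type) where
  | leaf (v : V) : SCD V
  | union (l r : SCD V) : SCD V
  | addVertex (t : SCD V) (v : V) : SCD V
  | unite (t : SCD V) (S₁ S₂ : Finset V) : SCD V
  | addAdj (t : SCD V) (S₁ S₂ : Finset V) : SCD V

variable {V : Type} [DecidableEq V]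

/-- The vertex set of the labeled graph produced by an scd. -/
def SCD.verts : SCD V → Finset V
  | .leaf v => {v}
  | .union l r => l.verts ∪ r.verts
  | .addVertex t v => t.verts ∪ {v}
  | .unite t _ _ => t.verts
  | .addAdj t _ _ => t.verts

/-- The set of labels (the partition of the vertices) of the graph produced. -/
def SCD.labels : SCD V → Finset (Finset V)
  | .leaf v => {{v}}
  | .union l r => l.labels ∪ r.labels
  | .addVertex t v => t.labels ∪ {{v}}
  | .unite t S₁ S₂ => (t.labels \ {S₁, S₂}) ∪ {S₁ ∪ S₂}
  | .addAdj t _ _ => t.labels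

/-- Well-formedness of an scd: unions are of vertex-disjoint graphs, added
vertices are new, and the unite/new-adjacency operations are applied to two
distinct existing labels. -/
def SCD.WF : SCD V → Prop
  | .leaf _ => True
  | .union l r => l.WF ∧ r.WF ∧ Disjoint l.verts r.verts
  | .addVertex t v => t.WF ∧ v ∉ t.verts
  | .unite t S₁ S₂ => t.WF ∧ S₁ ∈ t.labels ∧ S₂ ∈ t.labels ∧ S₁ ≠ S₂
  | .addAdj t S₁ S₂ => t.WF ∧ S₁ ∈ t.labels ∧ S₂ ∈ t.labels ∧ S₁ ≠ S₂

/-- The set 𝐒(T,𝐆) of all labels appearing at any node of the decomposition. -/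
def SCD.allLabels : SCD V → Finset (Finset V)
  | .leaf v => {{v}}
  | .union l r => l.allLabels ∪ r.allLabels
  | .addVertex t v => t.allLabels ∪ {{v}}
  | .unite t S₁ S₂ => t.allLabels ∪ {S₁ ∪ S₂}
  | .addAdj t _ _ => t.allLabels

/-- `T.isChild S₁ S₂`: the label `S₂` was created by uniting `S₁` with another
label somewhere in the decomposition (so `S₁` is a child of `S₂`). -/
def SCD.isChild : SCD V → Finset V → Finset V → Prop
  | .leaf _ => fun _ _ => False
  | .union l r => fun A B => l.isChild A B ∨ r.isChild A B
  | .addVertex t _ => t.isChild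
  | .unite t S₁ S₂ => fun A B => t.isChild A B ∨ ((A = S₁ ∨ A = S₂) ∧ B = S₁ ∪ S₂)
  | .addAdj t _ _ => t.isChild

/-- `T.isAdjArc S₁ S₂`: the new-adjacency operation was applied somewhere in the
decomposition, introducing all arcs from the label `S₁` to the label `S₂`. -/
def SCD.isAdjArc : SCD V → Finset V → Finset V → Prop
  | .leaf _ => fun _ _ => False
  | .union l r => fun A B => l.isAdjArc A B ∨ r.isAdjArc A B
  | .addVertex t _ => t.isAdjArc
  | .unite t _ _ => t.isAdjArc
  | .addAdj t S₁ S₂ => fun A B => t.isAdjArc A B ∨ (A = S₁ ∧ B = S₂)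

/-- The three kinds of gates associated with a label of the decomposition. -/
inductive GK where
  | oand : GK
  | oor : GK
  | inn : GK
deriving DecidableEq

/-- Gates of the circuit `F*` are pairs (label, kind); for a singleton label
the three gates coincide with the original gate, canonically represented with
kind `oand`. -/
def canon (p : Finset V × GK) : Finset V × GK :=
  if p.1.card = 1 then (p.1, GK.oand) else p

/-- An original gate of `F*`: the gate corresponding to a singleton label. -/
def OriginalGate (T : SCD V) (g : Finset V × GK) : Prop :=
  ∃ v : V, ({v} : Finset V) ∈ T.allLabels ∧ g = ({v}, GK.oand)

/-- The three kinds of wires of `F*`. -/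
inductive WKind where
  | cp : WKind   -- child-parent wire
  | pc : WKind   -- parent-child wire
  | adj : WKind  -- adjacency wire
deriving DecidableEq

/-- The wires of `F*`: child-parent wires from `oand`/`oor` of a child label to
that of its parent; parent-child wires from `in` of a parent label to `in` of a
child label; and, for each adjacency arc from `S₁` to `S₂`, an adjacency wire
from `oand(S₁)` or `oor(S₁)` (as chosen by `sel`) to `in(S₂)`. -/
def wire (T : SCD V) (sel : Finset V → Finset V → GK) :
    WKind → Finset V × GK → Finset V × GK → Prop
  | .cp, g₁, g₂ => ∃ (S₁ S₂ : Finset V) (k : GK),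
      (k = GK.oand ∨ k = GK.oor) ∧ T.isChild S₁ S₂ ∧
      g₁ = canon (S₁, k) ∧ g₂ = canon (S₂, k)
  | .pc, g₁, g₂ => ∃ S₁ S₂ : Finset V, T.isChild S₁ S₂ ∧
      g₁ = canon (S₂, GK.inn) ∧ g₂ = canon (S₁, GK.inn)
  | .adj, g₁, g₂ => ∃ S₁ S₂ : Finset V, T.isAdjArc S₁ S₂ ∧
      g₁ = canon (S₁, sel S₁ S₂) ∧ g₂ = canon (S₂, GK.inn)

/-- The wires of the original circuit `F`, as generated by the new-adjacency
arcs of the decomposition: there is a wire from `u` to `v` iff some adjacency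
arc goes from a label containing `u` to a label containing `v`. -/
def arcOf (T : SCD V) (u v : V) : Prop :=
  ∃ S₁ S₂ : Finset V, T.isAdjArc S₁ S₂ ∧ u ∈ S₁ ∧ v ∈ S₂

/-!
A wire of `F*` either follows the decomposition tree (child-parent wires go up through `oand`/`oor`
gates, parent-child wires go down through `in` gates) or is an adjacency wire. A path using tree
wires only can go down and then up, but never up and then down, since no wire leaves `oand`/`oor`
downwards; hence it never returns to its start, and its two end labels share a vertex. On a cycle
with adjacency wires, each adjacency wire from `S₁` to `S₂` joins every vertex of `S₁` to every
vertex of `S₂` in `F`, and consecutive adjacency wires are linked by tree paths whose end labels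
meet, so the cycle induces a cycle in `F`.
-/

open Relation

namespace Relation

variable {α : Type*} {L A : α → α → Prop}

lemma ReflTransGen.transGen_comp_of_transGen {x a b : α} (hx : ReflTransGen L x a)
    (hab : TransGen (Comp (ReflTransGen L) A) a b) : TransGen (Comp (ReflTransGen L) A) x b := by
  obtain ⟨c, ⟨d, had, hdc⟩, hcb⟩ := TransGen.head'_iff.mp hab
  exact TransGen.head' ⟨d, hx.trans had, hdc⟩ hcb

lemma transGen_or_exists_comp_of_transGen_or {a b : α}
    (h : TransGen (fun a b => L a b ∨ A a b) a b) :
    TransGen L a b ∨ ∃ x, TransGen (Comp (ReflTransGen L) A) a x ∧ ReflTransGen L x b := by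
  induction h with
  | @single c hac =>
    rcases hac with hL | hA
    · exact .inl (.single hL)
    · exact .inr ⟨c, .single ⟨a, .refl, hA⟩, .refl⟩
  | tail _ hbc ih =>
    rcases hbc with hL | hA
    · rcases ih with hab | ⟨x, hax, hxb⟩
      · exact .inl (hab.tail hL)
      · exact .inr ⟨x, hax, hxb.tail hL⟩
    · rcases ih with hab | ⟨x, hax, hxb⟩
      · exact .inr ⟨_, .single ⟨_, hab.to_reflTransGen, hA⟩, .refl⟩
      · exact .inr ⟨_, hax.tail ⟨_, hxb, hA⟩, .refl⟩

/-- A cycle of `L ∨ A` that uses `A` can be rotated to start right after an `A`-step. -/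
lemma transGen_self_or_exists_comp_of_transGen_or {g : α}
    (h : TransGen (fun a b => L a b ∨ A a b) g g) :
    TransGen L g g ∨ ∃ x, TransGen (Comp (ReflTransGen L) A) x x := by
  rcases transGen_or_exists_comp_of_transGen_or h with hL | ⟨x, hgx, hxg⟩
  · exact .inl hL
  · exact .inr ⟨x, hxg.transGen_comp_of_transGen hgx⟩

lemma TransGen.exists_forall_of_exists_forall {β : Type*} {R : α → α → Prop}
    {r : β → β → Prop} {f : α → Set β} (hR : ∀ a b, R a b → ∃ u ∈ f a, ∀ v ∈ f b, r u v)
    {a b : α} (h : TransGen R a b) : ∃ u ∈ f a, ∀ v ∈ f b, TransGen r u v := by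
  induction h using TransGen.head_induction_on with
  | single hab =>
    obtain ⟨u, hu, huv⟩ := hR _ _ hab
    exact ⟨u, hu, fun v hv => .single (huv v hv)⟩
  | head hab _ ih =>
    obtain ⟨u, hu, huv⟩ := hR _ _ hab
    obtain ⟨w, hw, hwv⟩ := ih
    exact ⟨u, hu, fun v hv => .head (huv w hw) (hwv v hv)⟩

end Relation

namespace SCD.WF

variable {T : SCD V}

lemma nonempty_of_mem_labels (h : T.WF) {S : Finset V} (hS : S ∈ T.labels) :
    S.Nonempty := by
  induction T generalizing S with
  | leaf v => simp_all [labels]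
  | union l r ihl ihr =>
    rcases Finset.mem_union.mp hS with hS | hS
    exacts [ihl h.1 hS, ihr h.2.1 hS]
  | addVertex t v ih =>
    rcases Finset.mem_union.mp hS with hS | hS
    · exact ih h.1 hS
    · simp_all
  | unite t S₁ S₂ ih =>
    simp only [labels, Finset.mem_union, Finset.mem_sdiff, Finset.mem_singleton] at hS
    rcases hS with ⟨hS, -⟩ | rfl
    · exact ih h.1 hS
    · exact (ih h.1 h.2.1).mono Finset.subset_union_left
  | addAdj t S₁ S₂ ih => exact ih h.1 hS

lemma subset_verts_of_mem_labels (h : T.WF) {S : Finset V} (hS : S ∈ T.labels) :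
    S ⊆ T.verts := by
  induction T generalizing S with
  | leaf v => simp_all [labels, verts]
  | union l r ihl ihr =>
    rcases Finset.mem_union.mp hS with hS | hS
    · exact (ihl h.1 hS).trans Finset.subset_union_left
    · exact (ihr h.2.1 hS).trans Finset.subset_union_right
  | addVertex t v ih =>
    rcases Finset.mem_union.mp hS with hS | hS
    · exact (ih h.1 hS).trans Finset.subset_union_left
    · simp_all [verts]
  | unite t S₁ S₂ ih =>
    simp only [labels, Finset.mem_union, Finset.mem_sdiff, Finset.mem_singleton] at hS
    rcases hS with ⟨hS, -⟩ | rfl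
    · exact ih h.1 hS
    · exact Finset.union_subset (ih h.1 h.2.1) (ih h.1 h.2.2.1)
  | addAdj t S₁ S₂ ih => exact ih h.1 hS

lemma disjoint_of_mem_labels (h : T.WF) {S S' : Finset V} (hS : S ∈ T.labels)
    (hS' : S' ∈ T.labels) (hne : S ≠ S') : Disjoint S S' := by
  induction T generalizing S S' with
  | leaf v => simp_all [labels]
  | union l r ihl ihr =>
    obtain ⟨hl, hr, hlr⟩ := h
    rcases Finset.mem_union.mp hS with hS | hS <;> rcases Finset.mem_union.mp hS' with hS' | hS'
    · exact ihl hl hS hS' hne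
    · exact hlr.mono (hl.subset_verts_of_mem_labels hS) (hr.subset_verts_of_mem_labels hS')
    · exact (hlr.mono (hl.subset_verts_of_mem_labels hS') (hr.subset_verts_of_mem_labels hS)).symm
    · exact ihr hr hS hS' hne
  | addVertex t v ih =>
    obtain ⟨ht, hv⟩ := h
    simp only [labels, Finset.mem_union, Finset.mem_singleton] at hS hS'
    rcases hS with hS | rfl <;> rcases hS' with hS' | rfl
    · exact ih ht hS hS' hne
    · exact Finset.disjoint_singleton_right.mpr fun hvS => hv (ht.subset_verts_of_mem_labels hS hvS)
    · exact Finset.disjoint_singleton_left.mpr fun hvS => hv (ht.subset_verts_of_mem_labels hS' hvS)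
    · exact absurd rfl hne
  | unite t S₁ S₂ ih =>
    obtain ⟨ht, h₁, h₂, h₁₂⟩ := h
    simp only [labels, Finset.mem_union, Finset.mem_sdiff, Finset.mem_singleton,
      Finset.mem_insert, not_or] at hS hS'
    rcases hS with ⟨hS, hS₁, hS₂⟩ | rfl <;> rcases hS' with ⟨hS', hS'₁, hS'₂⟩ | rfl
    · exact ih ht hS hS' hne
    · exact Finset.disjoint_union_right.mpr ⟨ih ht hS h₁ hS₁, ih ht hS h₂ hS₂⟩
    · exact Finset.disjoint_union_left.mpr
        ⟨ih ht h₁ hS' (Ne.symm hS'₁), ih ht h₂ hS' (Ne.symm hS'₂)⟩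
    · exact absurd rfl hne
  | addAdj t S₁ S₂ ih => exact ih h.1 hS hS' hne

lemma nonempty_of_isChild (h : T.WF) {A B : Finset V} (hAB : T.isChild A B) :
    A.Nonempty := by
  induction T with
  | leaf v => exact hAB.elim
  | union l r ihl ihr => exact hAB.elim (ihl h.1) (ihr h.2.1)
  | addVertex t v ih => exact ih h.1 hAB
  | unite t S₁ S₂ ih =>
    rcases hAB with hAB | ⟨rfl | rfl, -⟩
    exacts [ih h.1 hAB, h.1.nonempty_of_mem_labels h.2.1, h.1.nonempty_of_mem_labels h.2.2.1]
  | addAdj t S₁ S₂ ih => exact ih h.1 hAB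

lemma ssubset_of_isChild (h : T.WF) {A B : Finset V} (hAB : T.isChild A B) : A ⊂ B := by
  induction T with
  | leaf v => exact hAB.elim
  | union l r ihl ihr => exact hAB.elim (ihl h.1) (ihr h.2.1)
  | addVertex t v ih => exact ih h.1 hAB
  | unite t S₁ S₂ ih =>
    obtain ⟨ht, h₁, h₂, h₁₂⟩ := h
    have hdisj := ht.disjoint_of_mem_labels h₁ h₂ h₁₂
    rcases hAB with hAB | ⟨rfl | rfl, rfl⟩
    · exact ih ht hAB
    · rw [Finset.union_comm]
      exact hdisj.symm.right_lt_sup_of_left_ne_bot (ht.nonempty_of_mem_labels h₂).ne_empty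
    · exact hdisj.right_lt_sup_of_left_ne_bot (ht.nonempty_of_mem_labels h₁).ne_empty
  | addAdj t S₁ S₂ ih => exact ih h.1 hAB

lemma nonempty_of_isAdjArc (h : T.WF) {A B : Finset V} (hAB : T.isAdjArc A B) :
    A.Nonempty := by
  induction T with
  | leaf v => exact hAB.elim
  | union l r ihl ihr => exact hAB.elim (ihl h.1) (ihr h.2.1)
  | addVertex t v ih => exact ih h.1 hAB
  | unite t S₁ S₂ ih => exact ih h.1 hAB
  | addAdj t S₁ S₂ ih =>
    rcases hAB with hAB | ⟨rfl, -⟩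
    exacts [ih h.1 hAB, h.1.nonempty_of_mem_labels h.2.1]

lemma card_ne_one_of_isChild (h : T.WF) {A B : Finset V} (hAB : T.isChild A B) :
    B.card ≠ 1 := by
  have hA := (h.nonempty_of_isChild hAB).card_pos
  have hAB := Finset.card_lt_card (h.ssubset_of_isChild hAB)
  omega

end SCD.WF

@[simp]
lemma canon_fst {W : Type} (p : Finset W × GK) : (canon p).1 = p.1 := by
  unfold canon; split_ifs <;> rfl

lemma canon_of_card_ne_one {W : Type} {S : Finset W} (k : GK) (h : S.card ≠ 1) :
    canon (S, k) = (S, k) :=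
  if_neg h

def treeWire (T : SCD V) (sel : Finset V → Finset V → GK) (a b : Finset V × GK) : Prop :=
  wire T sel .cp a b ∨ wire T sel .pc a b

def IsAscent (a b : Finset V × GK) : Prop :=
  a.1 ⊂ b.1 ∧ a.1.Nonempty ∧ b.2 ≠ GK.inn

def IsDescent (a b : Finset V × GK) : Prop :=
  a.2 = GK.inn ∧ b.1 ⊂ a.1 ∧ b.1.Nonempty

/-- The possible shapes of a path of tree wires: up, down from an `in` gate, or down from an `in`
gate and then up, passing through an original gate whose vertex lies in both end labels. -/
def IsTreePathShape (a b : Finset V × GK) : Prop :=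
  IsAscent a b ∨ IsDescent a b ∨ (a.2 = GK.inn ∧ b.2 ≠ GK.inn ∧ (a.1 ∩ b.1).Nonempty)

namespace IsTreePathShape

variable {a b c : Finset V × GK}

lemma not_self : ¬ IsTreePathShape a a := by
  rintro (⟨h, -⟩ | ⟨-, h, -⟩ | ⟨h, h', -⟩)
  exacts [h.ne rfl, h.ne rfl, h' h]

lemma inter_nonempty (h : IsTreePathShape a b) : (a.1 ∩ b.1).Nonempty := by
  rcases h with ⟨hab, ha, -⟩ | ⟨-, hba, hb⟩ | ⟨-, -, h⟩
  · rwa [Finset.inter_eq_left.mpr hab.subset]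
  · rwa [Finset.inter_eq_right.mpr hba.subset]
  · exact h

/-- Nothing descends from an `oand`/`oor` gate, so a path that has started ascending keeps
ascending. -/
lemma tail (h : IsTreePathShape a b) (hbc : IsAscent b c ∨ IsDescent b c) :
    IsTreePathShape a c := by
  rcases hbc with ⟨hbc, -, hc⟩ | ⟨hb, hcb, hc⟩
  · rcases h with ⟨hab, ha, -⟩ | ⟨ha, hba, hb⟩ | ⟨ha, -, hab⟩
    · exact .inl ⟨hab.trans hbc, ha, hc⟩
    · exact .inr (.inr ⟨ha, hc, hb.mono (Finset.subset_inter hba.subset hbc.subset)⟩)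
    · exact .inr (.inr ⟨ha, hc, hab.mono (Finset.inter_subset_inter_left hbc.subset)⟩)
  · rcases h with ⟨-, -, hb'⟩ | ⟨ha, hba, -⟩ | ⟨-, hb', -⟩
    · exact absurd hb hb'
    · exact .inr (.inl ⟨ha, hcb.trans hba, hc⟩)
    · exact absurd hb hb'

end IsTreePathShape

namespace SCD.WF

variable {T : SCD V} {sel : Finset V → Finset V → GK} {a b : Finset V × GK}

lemma isAscent_or_isDescent_of_treeWire (h : T.WF) (hab : treeWire T sel a b) :
    IsAscent a b ∨ IsDescent a b := by
  rcases hab with ⟨S₁, S₂, k, hk, hS, rfl, rfl⟩ | ⟨S₁, S₂, hS, rfl, rfl⟩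
  · rw [canon_of_card_ne_one _ (h.card_ne_one_of_isChild hS)]
    refine .inl ⟨by simpa using h.ssubset_of_isChild hS,
      by simpa using h.nonempty_of_isChild hS, ?_⟩
    rcases hk with rfl | rfl <;> simp
  · rw [canon_of_card_ne_one _ (h.card_ne_one_of_isChild hS)]
    exact .inr ⟨rfl, by simpa using h.ssubset_of_isChild hS,
      by simpa using h.nonempty_of_isChild hS⟩

lemma isTreePathShape_of_transGen (h : T.WF) (hab : TransGen (treeWire T sel) a b) :
    IsTreePathShape a b := by
  induction hab with
  | single hab => exact (h.isAscent_or_isDescent_of_treeWire hab).elim .inl (.inr ∘ .inl)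
  | tail _ hbc ih => exact ih.tail (h.isAscent_or_isDescent_of_treeWire hbc)

lemma not_transGen_treeWire_self (h : T.WF) : ¬ TransGen (treeWire T sel) a a :=
  fun haa => (h.isTreePathShape_of_transGen haa).not_self

lemma exists_forall_arcOf_of_comp (h : T.WF)
    (hab : Comp (ReflTransGen (treeWire T sel)) (wire T sel .adj) a b) :
    ∃ u ∈ a.1, ∀ v ∈ b.1, arcOf T u v := by
  obtain ⟨c, hac, S₁, S₂, hS, rfl, rfl⟩ := hab
  have hmeet : (a.1 ∩ S₁).Nonempty := by
    rcases reflTransGen_iff_eq_or_transGen.mp hac with rfl | hac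
    · simpa using h.nonempty_of_isAdjArc hS
    · simpa using (h.isTreePathShape_of_transGen hac).inter_nonempty
  obtain ⟨u, hu⟩ := hmeet
  rw [Finset.mem_inter] at hu
  exact ⟨u, hu.1, fun v hv => ⟨S₁, S₂, hS, hu.2, by simpa using hv⟩⟩

end SCD.WF

theorem fstar_acyclic_general (T : SCD V) (hWF : T.WF)
    (sel : Finset V → Finset V → GK)
    (hF : ∀ v : V, ¬ Relation.TransGen (arcOf T) v v) :
    ∀ g : Finset V × GK,
      ¬ Relation.TransGen (fun a b => ∃ w : WKind, wire T sel w a b) g g := by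
  intro g hg
  have hsplit : TransGen (fun a b => treeWire T sel a b ∨ wire T sel .adj a b) g g := by
    refine TransGen.mono (fun a b hab => ?_) g g hg
    obtain ⟨w, hw⟩ := hab
    cases w
    exacts [.inl (.inl hw), .inl (.inr hw), .inr hw]
  rcases transGen_self_or_exists_comp_of_transGen_or hsplit with htree | ⟨x, hx⟩
  · exact hWF.not_transGen_treeWire_self htree
  · obtain ⟨u, hu, hcyc⟩ := hx.exists_forall_of_exists_forall (f := fun g => (g.1 : Set V))
      fun _ _ hab => hWF.exists_forall_arcOf_of_comp hab
    exact hF u (hcyc u hu)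

/-- If the circuit `F` is acyclic then the circuit `F*` constructed from a
simplified clique decomposition of `F` is acyclic. -/
theorem fstar_acyclic (T : SCD V) (hWF : T.WF)
    (sel : Finset V → Finset V → GK) (hsel : ∀ A B, sel A B ≠ GK.inn)
    (hF : ∀ v : V, ¬ Relation.TransGen (arcOf T) v v) :
    ∀ g : Finset V × GK,
      ¬ Relation.TransGen (fun a b => ∃ w : WKind, wire T sel w a b) g g :=
  fstar_acyclic_general T hWF sel hF
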